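/- arXiv:1910.02438 — 2 statements merged into one kernel-verified Lean document; each statement's English description precedes it below -/
import Mathlib

section
/- With the randomized rounding x of a unit vector v (x_i = sgn(v_i) with probability |v_i| independently), for any fixed indices i ≠ j, the conditional expectation E[xᵀx | x_i = ±1, x_j = ±1] ≤ 2 + √(n−2). -/
/-!
Each `X k ^ 2` is the indicator of `{X k ≠ 0}`, so the conditional expectation is the sum of the
conditional probabilities of these events. For `k = i, j` they are at most `1`; for every other `k`
the conditioning event is independent of `X k`, so the probability stays `|v k|`. Cauchy–Schwarz
bounds the sum of the remaining `n - 2` values `|v k|` by `√(n - 2)`.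
-/

open Finset MeasureTheory ProbabilityTheory

lemma sq_eq_indicator_preimage_ne_zero {Ω : Type*} {x : Ω → ℝ} {a : ℝ}
    (h : ∀ ω, x ω = Real.sign a ∨ x ω = 0) :
    (fun ω ↦ x ω ^ 2) = (x ⁻¹' {0}ᶜ).indicator 1 := by
  ext ω
  rcases h ω with hω | hω
  · rcases Real.sign_apply_eq a with ha | ha | ha <;> simp [hω, ha]
  · simp [hω]

section

variable {Ω ι β : Type*} [MeasurableSpace Ω] {μ : Measure Ω}

lemma probReal_compl_of_measure_eq_ofReal_one_sub [IsProbabilityMeasure μ] {s : Set Ω} {p : ℝ}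
    (hs : MeasurableSet s) (hp : p ≤ 1) (h : μ s = ENNReal.ofReal (1 - p)) :
    μ.real sᶜ = p := by
  rw [probReal_compl_eq_one_sub hs, measureReal_def, h, ENNReal.toReal_ofReal (by linarith)]
  ring

lemma ProbabilityTheory.iIndepFun.cond_preimage_eq_of_notMem [MeasurableSpace β]
    {X : ι → Ω → β} (hX : iIndepFun X μ) (hXm : ∀ m, Measurable (X m))
    {t : ι → Set β} (ht : ∀ m, MeasurableSet (t m)) {S : Finset ι} {k : ι} (hk : k ∉ S)
    (hS : μ (⋂ m ∈ S, X m ⁻¹' t m) ≠ 0) :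
    μ[X k ⁻¹' t k | ⋂ m ∈ S, X m ⁻¹' t m] = μ (X k ⁻¹' t k) := by
  classical
  have := hX.isProbabilityMeasure
  have hcomap : ∀ m ∈ insert k S, MeasurableSet[MeasurableSpace.comap (X m) ‹_›] (X m ⁻¹' t m) :=
    fun m _ ↦ ⟨t m, ht m, rfl⟩
  have hprod := hX.meas_biInter hcomap
  rw [set_biInter_insert, prod_insert hk,
    ← hX.meas_biInter fun m hm ↦ hcomap m (mem_insert_of_mem hm)] at hprod
  rw [cond_apply (S.measurableSet_biInter fun m _ ↦ hXm m (ht m)), Set.inter_comm, hprod,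
    mul_left_comm, ENNReal.inv_mul_cancel hS (measure_ne_top _ _), mul_one]

lemma sum_abs_le_sqrt_card_of_sum_sq_le_one {T : Finset ι} {v : ι → ℝ}
    (hv : ∑ k ∈ T, v k ^ 2 ≤ 1) : ∑ k ∈ T, |v k| ≤ √(#T) := by
  apply Real.le_sqrt_of_sq_le
  calc (∑ k ∈ T, |v k|) ^ 2 ≤ #T * ∑ k ∈ T, |v k| ^ 2 := sq_sum_le_card_mul_sum_sq
    _ ≤ #T := by
      simp only [sq_abs]
      exact mul_le_of_le_one_right (Nat.cast_nonneg _) hv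

lemma abs_le_one_of_sum_sq_eq_one [Fintype ι] {v : ι → ℝ} (hv : ∑ k, v k ^ 2 = 1) (k : ι) :
    |v k| ≤ 1 :=
  (sq_le_one_iff_abs_le_one _).1 (hv ▸ single_le_sum (fun m _ ↦ sq_nonneg (v m)) (mem_univ k))

lemma cast_card_compl_pair {n : ℕ} {i j : Fin n} (hij : i ≠ j) :
    (#({i, j}ᶜ : Finset (Fin n)) : ℝ) = n - 2 := by
  rw [card_compl, Nat.cast_sub (card_le_univ _), card_pair hij, Fintype.card_fin, Nat.cast_ofNat]

end

theorem stmt9_general {n : ℕ} {Ω : Type*} [MeasurableSpace Ω]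
    (μ : Measure Ω) [IsProbabilityMeasure μ]
    (v : Fin n → ℝ) (hunit : ∑ i, (v i) ^ 2 = 1)
    (X : Fin n → Ω → ℝ)
    (hmeas : ∀ i, Measurable (X i))
    (hind : iIndepFun X μ)
    (hval : ∀ i, ∀ ω, X i ω = Real.sign (v i) ∨ X i ω = 0)
    (hzero : ∀ i, μ {ω | X i ω = 0} = ENNReal.ofReal (1 - |v i|)) :
    ∀ i j : Fin n, i ≠ j →
      (∫ ω, ∑ k, (X k ω) ^ 2 ∂(μ[|{ω | X i ω ≠ 0 ∧ X j ω ≠ 0}])) ≤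
        2 + Real.sqrt ((n : ℝ) - 2) := by
  intro i j hij
  have hne : ∀ k, MeasurableSet (X k ⁻¹' {0}ᶜ) := fun k ↦ hmeas k (measurableSet_singleton 0).compl
  have hsq : ∀ k, (fun ω ↦ X k ω ^ 2) = (X k ⁻¹' {0}ᶜ).indicator 1 :=
    fun k ↦ sq_eq_indicator_preimage_ne_zero (hval k)
  set s := ⋂ m ∈ ({i, j} : Finset (Fin n)), X m ⁻¹' {0}ᶜ
  have hs : {ω | X i ω ≠ 0 ∧ X j ω ≠ 0} = s := by ext; simp [s]
  rw [hs]
  rcases eq_or_ne (μ s) 0 with hs0 | hs0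
  · simp only [cond_eq_zero_of_meas_eq_zero hs0, integral_zero_measure]
    positivity
  have := cond_isProbabilityMeasure hs0
  have hE : ∀ k, ∫ ω, X k ω ^ 2 ∂μ[|s] = (μ[|s]).real (X k ⁻¹' {0}ᶜ) := fun k ↦ by
    rw [hsq k, integral_indicator_one (hne k)]
  rw [integral_finsetSum _ fun k _ ↦ hsq k ▸ (integrable_const 1).indicator (hne k),
    ← sum_add_sum_compl {i, j}]
  gcongr ?_ + ?_
  · calc ∑ k ∈ {i, j}, ∫ ω, X k ω ^ 2 ∂μ[|s] ≤ ∑ k ∈ ({i, j} : Finset (Fin n)), (1 : ℝ) :=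
          sum_le_sum fun k _ ↦ (hE k).trans_le measureReal_le_one
      _ = 2 := by simp [hij]
  · calc ∑ k ∈ {i, j}ᶜ, ∫ ω, X k ω ^ 2 ∂μ[|s] = ∑ k ∈ {i, j}ᶜ, |v k| := by
          refine sum_congr rfl fun k hk ↦ ?_
          rw [hE k, measureReal_def, hind.cond_preimage_eq_of_notMem hmeas
            (fun _ ↦ (measurableSet_singleton 0).compl) (mem_compl.1 hk) hs0, ← measureReal_def]
          exact probReal_compl_of_measure_eq_ofReal_one_sub (hmeas k (measurableSet_singleton 0))
            (abs_le_one_of_sum_sq_eq_one hunit k) (hzero k)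
      _ ≤ √(#({i, j}ᶜ : Finset (Fin n))) := sum_abs_le_sqrt_card_of_sum_sq_le_one
          (hunit ▸ sum_le_univ_sum_of_nonneg fun k ↦ sq_nonneg (v k))
      _ = √(n - 2) := by rw [cast_card_compl_pair hij]

theorem stmt9 {n : ℕ} {Ω : Type*} [MeasurableSpace Ω]
    (μ : Measure Ω) [IsProbabilityMeasure μ]
    (v : Fin n → ℝ) (hunit : ∑ i, (v i) ^ 2 = 1)
    (X : Fin n → Ω → ℝ)
    (hmeas : ∀ i, Measurable (X i))
    (hind : iIndepFun X μ)
    (hval : ∀ i, ∀ ω, X i ω = Real.sign (v i) ∨ X i ω = 0)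
    (hsgn : ∀ i, v i ≠ 0 → μ {ω | X i ω = Real.sign (v i)} = ENNReal.ofReal |v i|)
    (hzero : ∀ i, μ {ω | X i ω = 0} = ENNReal.ofReal (1 - |v i|)) :
    ∀ i j : Fin n, i ≠ j →
      (∫ ω, ∑ k, (X k ω) ^ 2 ∂(μ[|{ω | X i ω ≠ 0 ∧ X j ω ≠ 0}])) ≤
        2 + Real.sqrt ((n : ℝ) - 2) :=
  stmt9_general μ v hunit X hmeas hind hval hzero
end

section
/- For the complete signed graph on n > 16 vertices whose negative edges form a Hamiltonian cycle, the all-ones vector x = (1,…,1) ∈ {−1,0,1}ⁿ achieves objective xᵀAx / xᵀx = n − 5, which equals the largest eigenvalue λ₁; hence OPT = n − 5 for this instance of the 2PC problem. -/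
/-!
Write `A = J - I - 2 (P + Pᵀ)` with `P` the permutation matrix of `σ` (here the cyclic shift), so that
`yᵀ A y = (∑ y)² - ‖y‖² - 4 ∑ yᵢ y_{σ i}`. Cauchy–Schwarz applied to `y` and to `y + y ∘ σ` gives
`(∑ y)² ≤ n ‖y‖²` and `4 (∑ y)² ≤ n (2 ‖y‖² + 2 ∑ yᵢ y_{σ i})`; adding `n - 8 ≥ 0` times the first
to twice the second and dividing by `n` yields `yᵀ A y ≤ (n - 5) ‖y‖²`. Equality holds at the
all-ones vector, whose row sums are `n - 5`, so `n - 5` is both the largest eigenvalue and the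
optimum over `{-1, 0, 1}ⁿ`.
-/

open Matrix Finset

namespace Matrix

variable {ι : Type*} [Fintype ι] [DecidableEq ι]

theorem IsHermitian.iSup_eigenvalues_eq_of_dotProduct_mulVec_le {A : Matrix ι ι ℝ}
    (hA : A.IsHermitian) {c : ℝ} {x : ι → ℝ} (hx : x ≠ 0) (hAx : A *ᵥ x = c • x)
    (hle : ∀ y, y ⬝ᵥ A *ᵥ y ≤ c * (y ⬝ᵥ y)) :
    ⨆ i, hA.eigenvalues i = c := by
  have : Nonempty ι := by
    obtain ⟨i, -⟩ := Function.ne_iff.mp hx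
    exact ⟨i⟩
  refine le_antisymm (ciSup_le fun i => ?_) ?_
  · have hunit : ⇑(hA.eigenvectorBasis i) ⬝ᵥ ⇑(hA.eigenvectorBasis i) = 1 := by
      have h := real_inner_self_eq_norm_sq (hA.eigenvectorBasis i)
      rw [EuclideanSpace.inner_eq_star_dotProduct, hA.eigenvectorBasis.orthonormal.1 i] at h
      simpa using h
    simpa [hA.mulVec_eigenvectorBasis i, hunit] using hle (hA.eigenvectorBasis i)
  · have hc : c ∈ spectrum ℝ A := by
      rw [← spectrum_toLin', ← Module.End.hasEigenvalue_iff_mem_spectrum]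
      exact Module.End.hasEigenvalue_of_hasEigenvector
        ⟨Module.End.mem_eigenspace_iff.mpr (by simpa using hAx), hx⟩
    rw [hA.spectrum_real_eq_range_eigenvalues] at hc
    obtain ⟨i, rfl⟩ := hc
    exact le_ciSup (Set.finite_range _).bddAbove i

/-- Signed adjacency matrix of the complete graph on `ι` whose negative edges are the pairs `{i, σ i}`. -/
def signedPermAdj (σ : Equiv.Perm ι) : Matrix ι ι ℝ :=
  of fun i j => if i = j then 0 else if j = σ i ∨ i = σ j then -1 else 1

variable {σ : Equiv.Perm ι}

omit [Fintype ι] in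
theorem signedPermAdj_apply (hσ : ∀ i, σ i ≠ i) (hσσ : ∀ i, σ (σ i) ≠ i) (i j : ι) :
    signedPermAdj σ i j =
      1 - (if i = j then 1 else 0) - 2 * (if j = σ i then 1 else 0)
        - 2 * (if i = σ j then 1 else 0) := by
  simp only [signedPermAdj, of_apply]
  by_cases hij : i = j
  · subst hij
    simp [(hσ i).symm]
  by_cases hj : j = σ i
  · subst hj
    norm_num [hij, (hσσ i).symm]
  by_cases hi : i = σ j
  · subst hi
    norm_num [hσ j, (hσσ j).symm]
  · simp [hij, hj, hi]

theorem signedPermAdj_mulVec_one (hσ : ∀ i, σ i ≠ i) (hσσ : ∀ i, σ (σ i) ≠ i) :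
    signedPermAdj σ *ᵥ (fun _ => 1) = ((Fintype.card ι : ℝ) - 5) • fun _ => 1 := by
  ext i
  have hcount : ∑ j, (if i = σ j then (1 : ℝ) else 0) = 1 := by
    simpa using Equiv.sum_comp σ (fun k => if i = k then (1 : ℝ) else 0)
  simp only [mulVec, dotProduct, mul_one, signedPermAdj_apply hσ hσσ, sum_sub_distrib,
    ← mul_sum, hcount, sum_ite_eq, sum_ite_eq', mem_univ, if_true, sum_const, card_univ,
    nsmul_eq_mul, Pi.smul_apply, smul_eq_mul]
  ring

theorem dotProduct_signedPermAdj_mulVec (hσ : ∀ i, σ i ≠ i) (hσσ : ∀ i, σ (σ i) ≠ i)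
    (y : ι → ℝ) :
    y ⬝ᵥ signedPermAdj σ *ᵥ y = (∑ i, y i) ^ 2 - ∑ i, y i ^ 2 - 4 * ∑ i, y i * y (σ i) := by
  have hentry : ∀ i j, y i * (signedPermAdj σ i j * y j) = y i * y j
      - (if i = j then y i * y j else 0) - 2 * (if j = σ i then y i * y j else 0)
      - 2 * (if i = σ j then y i * y j else 0) := by
    intro i j
    rw [signedPermAdj_apply hσ hσσ]
    split_ifs <;> ring
  have hJ : ∑ i, ∑ j, y i * y j = (∑ i, y i) ^ 2 := by rw [sq, sum_mul_sum]
  have hI : ∑ i, ∑ j, (if i = j then y i * y j else 0) = ∑ i, y i ^ 2 := by simp [sq]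
  have hP : ∑ i, ∑ j, (if j = σ i then y i * y j else 0) = ∑ i, y i * y (σ i) := by simp
  have hPt : ∑ i, ∑ j, (if i = σ j then y i * y j else 0) = ∑ i, y i * y (σ i) := by
    rw [sum_comm]
    simp [mul_comm]
  simp only [dotProduct, mulVec, mul_sum, hentry, sum_sub_distrib]
  rw [hJ, hI]
  simp only [← mul_sum, hP, hPt]
  ring

theorem dotProduct_signedPermAdj_mulVec_le (hσ : ∀ i, σ i ≠ i) (hσσ : ∀ i, σ (σ i) ≠ i)
    (hcard : 8 ≤ Fintype.card ι) (y : ι → ℝ) :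
    y ⬝ᵥ signedPermAdj σ *ᵥ y ≤ ((Fintype.card ι : ℝ) - 5) * (y ⬝ᵥ y) := by
  have hN : (8 : ℝ) ≤ Fintype.card ι := by exact_mod_cast hcard
  set N : ℝ := (Fintype.card ι : ℝ)
  set S := ∑ i, y i
  set Q := ∑ i, y i ^ 2
  set P := ∑ i, y i * y (σ i)
  have hcs : S ^ 2 ≤ N * Q := by simpa using sq_sum_le_card_mul_sum_sq (s := univ) (f := y)
  have hcs_shift : (2 * S) ^ 2 ≤ N * (2 * Q + 2 * P) := by
    have hsum : ∑ i, (y i + y (σ i)) = 2 * S := by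
      rw [sum_add_distrib, Equiv.sum_comp σ y]
      ring
    have hsq : ∑ i, (y i + y (σ i)) ^ 2 = 2 * Q + 2 * P := by
      simp only [add_sq, sum_add_distrib, Equiv.sum_comp σ (fun i => y i ^ 2), mul_assoc,
        ← mul_sum]
      ring
    simpa [hsum, hsq] using sq_sum_le_card_mul_sum_sq (s := univ) (f := fun i => y i + y (σ i))
  have hscaled : N * S ^ 2 ≤ N * ((N - 4) * Q + 4 * P) := by
    nlinarith [mul_le_mul_of_nonneg_left hcs (by linarith : (0 : ℝ) ≤ N - 8)]
  have hyy : y ⬝ᵥ y = Q := by simp [dotProduct, Q, sq]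
  rw [dotProduct_signedPermAdj_mulVec hσ hσσ, hyy]
  nlinarith [le_of_mul_le_mul_left hscaled (by linarith)]

end Matrix

theorem stmt12 {n : ℕ} [NeZero n] (hn : 16 < n)
    (A : Matrix (Fin n) (Fin n) ℝ)
    (hAdef : ∀ i j : Fin n, A i j =
      if i = j then 0 else if j = i + 1 ∨ i = j + 1 then -1 else 1)
    (hA : A.IsHermitian)
    (x : Fin n → ℝ) (hxdef : x = fun _ => 1) :
    x ⬝ᵥ A.mulVec x / (x ⬝ᵥ x) = (n : ℝ) - 5 ∧
    (⨆ i, hA.eigenvalues i) = (n : ℝ) - 5 ∧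
    ∀ y : Fin n → ℝ, (∀ i, y i = -1 ∨ y i = 0 ∨ y i = 1) → y ≠ 0 →
      y ⬝ᵥ A.mulVec y / (y ⬝ᵥ y) ≤ (n : ℝ) - 5 := by
  have hσ : ∀ i : Fin n, i + 1 ≠ i := fun i h => by
    rw [add_eq_left, Fin.one_eq_zero_iff] at h
    omega
  have hσσ : ∀ i : Fin n, i + 1 + 1 ≠ i := fun i h => by
    rw [add_assoc, add_eq_left, Fin.ext_iff, Fin.val_add, Fin.val_one', Fin.val_zero,
      Nat.one_mod_eq_one.mpr (by omega), Nat.mod_eq_of_lt (by omega)] at h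
    omega
  obtain rfl : A = signedPermAdj (Equiv.addRight 1) := by
    ext i j
    rw [hAdef]
    rfl
  have hAx := signedPermAdj_mulVec_one (σ := Equiv.addRight 1) hσ hσσ
  have hle := dotProduct_signedPermAdj_mulVec_le (σ := Equiv.addRight 1) hσ hσσ
    (by rw [Fintype.card_fin]; omega)
  rw [Fintype.card_fin] at hAx hle
  have hpos : ∀ y : Fin n → ℝ, y ≠ 0 → 0 < y ⬝ᵥ y := fun y hy => by
    simpa using dotProduct_self_star_pos_iff.2 hy
  have hx : x ≠ 0 := fun h => by simpa [hxdef] using congrFun h 0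
  subst hxdef
  refine ⟨?_, hA.iSup_eigenvalues_eq_of_dotProduct_mulVec_le hx hAx hle,
    fun y _ hy => (div_le_iff₀ (hpos y hy)).2 (hle y)⟩
  rw [hAx, dotProduct_smul, smul_eq_mul, mul_div_assoc, div_self (hpos _ hx).ne', mul_one]
end
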